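/- arXiv:2311.02273 — 2 statements merged into one kernel-verified Lean document; each statement's English description precedes it below -/
import Mathlib

section
/- The sequential learning procedure 𝒫(ρ,k) terminates with probability one: P(N_{𝒫(ρ,k)} < ∞) = 1. Equivalently, the stopping time t = inf{n ≥ m₀ : kn(kn − p) ≥ ρ n* Σ_{i=1}^{n} U_i}, where U_1, U_2, … are i.i.d. χ²_k random variables, is almost surely finite. -/
open MeasureTheory ProbabilityTheory Filter Matrix NNReal

noncomputable section

namespace SeqLearn

variable {Ω : Type*} [MeasurableSpace Ω]

/-- The design matrix `𝕏_n` built from the infinite sequence of design rows `X`. -/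
def designMat (p : ℕ) (X : ℕ → Fin p → ℝ) (n : ℕ) : Matrix (Fin n) (Fin p) ℝ :=
  Matrix.of fun i j => X (i : ℕ) j

/-- The response vector `Y_n = 𝕏_n β + ε_n`. -/
def Yvec (p : ℕ) (X : ℕ → Fin p → ℝ) (β : Fin p → ℝ) (ε : ℕ → Ω → ℝ)
    (n : ℕ) (ω : Ω) : Fin n → ℝ :=
  fun i => (∑ j, X (i : ℕ) j * β j) + ε (i : ℕ) ω

/-- The least squares estimator `β̂_n = (𝕏_n′𝕏_n)⁻¹ 𝕏_n′ Y_n`. -/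
def lse (p : ℕ) (X : ℕ → Fin p → ℝ) (β : Fin p → ℝ) (ε : ℕ → Ω → ℝ)
    (n : ℕ) (ω : Ω) : Fin p → ℝ :=
  ((designMat p X n)ᵀ * designMat p X n)⁻¹ *ᵥ
    ((designMat p X n)ᵀ *ᵥ Yvec p X β ε n ω)

/-- The residual variance estimator
`S_n² = (n - p)⁻¹ (Y_n - 𝕏_n β̂_n)′(Y_n - 𝕏_n β̂_n)`. -/
def S2 (p : ℕ) (X : ℕ → Fin p → ℝ) (β : Fin p → ℝ) (ε : ℕ → Ω → ℝ)
    (n : ℕ) (ω : Ω) : ℝ :=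
  ((n : ℝ) - (p : ℝ))⁻¹ *
    ∑ i, (Yvec p X β ε n ω i - (designMat p X n *ᵥ lse p X β ε n ω) i) ^ 2

/-- The loss `L(β, β̂_n) = n⁻¹ (β̂_n - β)′ (𝕏_n′𝕏_n) (β̂_n - β)`. -/
def loss (p : ℕ) (X : ℕ → Fin p → ℝ) (β : Fin p → ℝ) (ε : ℕ → Ω → ℝ)
    (n : ℕ) (ω : Ω) : ℝ :=
  (n : ℝ)⁻¹ *
    ((lse p X β ε n ω - β) ⬝ᵥ
      (((designMat p X n)ᵀ * designMat p X n) *ᵥ (lse p X β ε n ω - β)))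

/-- The Gauss–Markov setup with independent normal errors: the errors `ε_i` are
i.i.d. `N(0, σ²)` random variables. -/
def GaussErrors (μ : Measure Ω) (σ2 : ℝ≥0) (ε : ℕ → Ω → ℝ) : Prop :=
  (∀ i, Measurable (ε i)) ∧
    iIndepFun ε μ ∧
    ∀ i, μ.map (ε i) = gaussianReal 0 σ2

/-- The stopping criterion of the procedure `𝒫(ρ,k)`:
`m + kn ≥ ρ b⁻¹ p S²_{m+kn}` is satisfied at stage `n`. -/
def stopRule (p : ℕ) (X : ℕ → Fin p → ℝ) (β : Fin p → ℝ) (ε : ℕ → Ω → ℝ)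
    (ρ b : ℝ) (m k : ℕ) (ω : Ω) (n : ℕ) : Prop :=
  ρ * b⁻¹ * (p : ℝ) * S2 p X β ε (m + k * n) ω ≤ ((m + k * n : ℕ) : ℝ)

/-- The stopping time `T_{𝒫(ρ,k)} = inf {n ≥ 0 : m + kn ≥ ρ b⁻¹ p S²_{m+kn}}`. -/
def Tstop (p : ℕ) (X : ℕ → Fin p → ℝ) (β : Fin p → ℝ) (ε : ℕ → Ω → ℝ)
    (ρ b : ℝ) (m k : ℕ) (ω : Ω) : ℕ :=
  sInf {n : ℕ | stopRule p X β ε ρ b m k ω n}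

/-- `N*_{𝒫(ρ,k)} = ρ⁻¹ (m + k T_{𝒫(ρ,k)})`. -/
def Nstar (p : ℕ) (X : ℕ → Fin p → ℝ) (β : Fin p → ℝ) (ε : ℕ → Ω → ℝ)
    (ρ b : ℝ) (m k : ℕ) (ω : Ω) : ℝ :=
  ρ⁻¹ * ((m : ℝ) + (k : ℝ) * (Tstop p X β ε ρ b m k ω : ℝ))

/-- The final sample size `N_{𝒫(ρ,k)} = ⌊N*⌋ + 1`, where `⌊u⌋` is the largest
integer strictly smaller than `u`; for `N* > 0` this is exactly `⌈N*⌉`. -/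
def Nfin (p : ℕ) (X : ℕ → Fin p → ℝ) (β : Fin p → ℝ) (ε : ℕ → Ω → ℝ)
    (ρ b : ℝ) (m k : ℕ) (ω : Ω) : ℕ :=
  ⌈Nstar p X β ε ρ b m k ω⌉₊

/-!
The least squares residual is the orthogonal projection of the error vector onto the complement
of the column space of the design, so `(N - p) S²_N ≤ ∑_{i < N} ε_i²`. By the strong law of
large numbers, almost surely `∑_{i < N} ε_i² = O(N)` and `∑_{i < n} U_i = O(n)`. Hence
`ρ b⁻¹ p S²_N` stays bounded while `N → ∞`, and the linear `ρ n* ∑_{i < n} U_i` is eventually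
beaten by the quadratic `kn (kn - p)`.
-/

open Finset

theorem _root_.Matrix.isUnit_of_rank_eq_card {K n : Type*} [Field K] [Fintype n] [DecidableEq n]
    {A : Matrix n n K} (h : A.rank = Fintype.card n) : IsUnit A := by
  rw [← mulVec_surjective_iff_isUnit, ← Matrix.coe_mulVecLin, ← LinearMap.range_eq_top]
  exact Submodule.eq_top_of_finrank_eq (by rwa [Module.finrank_fintype_fun_eq_card])

theorem _root_.Matrix.dotProduct_self_residual_le {R ι κ : Type*} [Field R] [LinearOrder R]
    [IsStrictOrderedRing R] [Fintype ι] [Fintype κ] [DecidableEq κ] (A : Matrix ι κ R)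
    (hA : IsUnit (Aᵀ * A).det) (β : κ → R) (e : ι → R) :
    let y := A *ᵥ β + e
    (y - A *ᵥ ((Aᵀ * A)⁻¹ *ᵥ (Aᵀ *ᵥ y))) ⬝ᵥ (y - A *ᵥ ((Aᵀ * A)⁻¹ *ᵥ (Aᵀ *ᵥ y))) ≤ e ⬝ᵥ e := by
  intro y
  set w := A *ᵥ ((Aᵀ * A)⁻¹ *ᵥ (Aᵀ *ᵥ e))
  have hfit : A *ᵥ ((Aᵀ * A)⁻¹ *ᵥ (Aᵀ *ᵥ y)) = A *ᵥ β + w := by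
    simp only [y, w, mulVec_add, mulVec_mulVec, ← Matrix.mul_assoc,
      nonsing_inv_mul _ hA, Matrix.mul_one]
  have hresid : y - A *ᵥ ((Aᵀ * A)⁻¹ *ᵥ (Aᵀ *ᵥ y)) = e - w := by
    rw [hfit]; simp only [y]; abel
  -- `Aᵀ (e - w) = 0`: the residual is orthogonal to the column space, which contains `w`.
  have horth : (e - w) ⬝ᵥ w = 0 := by
    rw [dotProduct_mulVec, ← mulVec_transpose, mulVec_sub, mulVec_mulVec,
      mulVec_mulVec, mul_nonsing_inv _ hA, one_mulVec, sub_self, zero_dotProduct]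
  have hw : 0 ≤ w ⬝ᵥ w := Finset.sum_nonneg fun i _ => mul_self_nonneg (w i)
  have hpyth : e ⬝ᵥ e = (e - w) ⬝ᵥ (e - w) + 2 * ((e - w) ⬝ᵥ w) + w ⬝ᵥ w := by
    simp only [sub_dotProduct, dotProduct_sub, dotProduct_comm w e]; ring
  rw [hresid]
  linarith

theorem exists_ae_eventually_sum_comp_le_mul {α : Type*} [MeasurableSpace α] {μ : Measure Ω}
    {ν : Measure α} (V : ℕ → Ω → α) (hmeas : ∀ i, Measurable (V i)) (hindep : iIndepFun V μ)
    (hlaw : ∀ i, μ.map (V i) = ν) {g : α → ℝ} (hg : Measurable g) (hint : Integrable g ν) :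
    ∃ C : ℝ, ∀ᵐ ω ∂μ, ∀ᶠ n in atTop, ∑ i ∈ range n, g (V i ω) ≤ C * n := by
  set W : ℕ → Ω → ℝ := fun i => g ∘ V i
  have hWint : Integrable (W 0) μ := by
    rw [← hlaw 0] at hint
    exact (integrable_map_measure hint.aestronglyMeasurable (hmeas 0).aemeasurable).mp hint
  have hWindep : Pairwise fun i j => W i ⟂ᵢ[μ] W j := fun i j hij =>
    (hindep.indepFun hij).comp hg hg
  have hWident (i : ℕ) : IdentDistrib (W i) (W 0) μ μ :=
    IdentDistrib.comp ⟨(hmeas i).aemeasurable, (hmeas 0).aemeasurable, by rw [hlaw i, hlaw 0]⟩ hg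
  refine ⟨μ[W 0] + 1, ?_⟩
  filter_upwards [strong_law_ae_real W hWint hWindep hWident] with ω hω
  filter_upwards [hω.eventually_lt_const (lt_add_one _), eventually_gt_atTop 0] with n hn hn0
  exact ((div_lt_iff₀ (by exact_mod_cast hn0)).mp hn).le

theorem _root_.ProbabilityTheory.integrable_id_gammaMeasure {a r : ℝ} (ha : 0 < a) (hr : 0 < r) :
    Integrable id (gammaMeasure a r) := by
  unfold gammaMeasure gammaPDF
  rw [integrable_withDensity_iff (measurable_gammaPDFReal a r).ennreal_ofReal
    (.of_forall fun _ => ENNReal.ofReal_lt_top)]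
  have hdens : (fun x => id x * (ENNReal.ofReal (gammaPDFReal a r x)).toReal) =
      (Set.Ioi 0).indicator
        fun x => r ^ a / Real.Gamma a * (x ^ a * Real.exp (-r * x ^ (1 : ℝ))) := by
    ext x
    rw [ENNReal.toReal_ofReal (gammaPDFReal_nonneg ha hr x), gammaPDFReal]
    rcases le_or_gt x 0 with hx | hx
    · rw [Set.indicator_of_notMem (Set.notMem_Ioi.mpr hx)]
      split_ifs <;> simp_all [le_antisymm hx]
    · rw [Set.indicator_of_mem (Set.mem_Ioi.mpr hx), if_pos hx.le, Real.rpow_one,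
        Real.rpow_sub_one hx.ne', id]
      field_simp
  rw [hdens, integrable_indicator_iff measurableSet_Ioi]
  exact (integrableOn_rpow_mul_exp_neg_mul_rpow (by linarith) one_pos hr).const_mul _

theorem eventually_mul_le_mul_sub (a b : ℝ) {k : ℕ} (hk : 1 ≤ k) :
    ∀ᶠ n : ℕ in atTop, a * n ≤ ((k * n : ℕ) : ℝ) * (((k * n : ℕ) : ℝ) - b) := by
  filter_upwards [eventually_ge_atTop ⌈|a| + |b|⌉₊] with n hn
  have hab : |a| + |b| ≤ n := Nat.ceil_le.mp hn
  have hkn : (n : ℝ) ≤ ((k * n : ℕ) : ℝ) := by exact_mod_cast Nat.le_mul_of_pos_left n hk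
  have hgap : |a| ≤ ((k * n : ℕ) : ℝ) - b := by linarith [le_abs_self b]
  calc a * n ≤ |a| * n := by gcongr; exact le_abs_self a
    _ ≤ (((k * n : ℕ) : ℝ) - b) * n := by gcongr
    _ ≤ (((k * n : ℕ) : ℝ) - b) * ((k * n : ℕ) : ℝ) := by gcongr; linarith [abs_nonneg a]
    _ = _ := mul_comm _ _

theorem Yvec_eq {Ω : Type*} (p : ℕ) (X : ℕ → Fin p → ℝ) (β : Fin p → ℝ) (ε : ℕ → Ω → ℝ)
    (n : ℕ) (ω : Ω) :
    Yvec p X β ε n ω = designMat p X n *ᵥ β + fun i : Fin n => ε i ω := by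
  ext i
  simp [Yvec, designMat, mulVec, dotProduct]

theorem S2_le_of_rank_eq {Ω : Type*} {p : ℕ} (X : ℕ → Fin p → ℝ) (β : Fin p → ℝ)
    (ε : ℕ → Ω → ℝ) {N : ℕ} (hN : p < N) (hrank : (designMat p X N).rank = p) (ω : Ω) :
    S2 p X β ε N ω ≤ ((N : ℝ) - p)⁻¹ * ∑ i ∈ range N, ε i ω ^ 2 := by
  have hdet : IsUnit ((designMat p X N)ᵀ * designMat p X N).det :=
    (isUnit_of_rank_eq_card (by rw [rank_transpose_mul_self, hrank, Fintype.card_fin])).map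
      detMonoidHom
  have hNp : (0 : ℝ) ≤ (N : ℝ) - p := sub_nonneg.mpr (by exact_mod_cast hN.le)
  refine mul_le_mul_of_nonneg_left ?_ (inv_nonneg.mpr hNp)
  rw [← Fin.sum_univ_eq_sum_range (fun i => ε i ω ^ 2)]
  simpa [dotProduct, sq, lse, Yvec_eq] using
    dotProduct_self_residual_le (designMat p X N) hdet β fun i : Fin N => ε i ω

theorem eventually_mul_S2_le {Ω : Type*} {p : ℕ} (X : ℕ → Fin p → ℝ) (β : Fin p → ℝ)
    (ε : ℕ → Ω → ℝ) (hrank : ∀ j, p + 1 ≤ j → (designMat p X j).rank = p) {c C : ℝ}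
    (hc : 0 ≤ c) (ω : Ω)
    (hsum : ∀ᶠ N in atTop, ∑ i ∈ range N, ε i ω ^ 2 ≤ C * N) :
    ∀ᶠ N in atTop, c * S2 p X β ε N ω ≤ N := by
  filter_upwards [hsum, eventually_ge_atTop (p + 1 + ⌈c * C⌉₊)] with N hsumN hN
  have hcC : c * C ≤ (N : ℝ) - p := by
    have : (p : ℝ) + 1 + ⌈c * C⌉₊ ≤ N := by exact_mod_cast hN
    linarith [Nat.le_ceil (c * C)]
  have hNp : (0 : ℝ) < (N : ℝ) - p := by
    rw [sub_pos]; exact_mod_cast (by omega : p < N)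
  calc c * S2 p X β ε N ω ≤ c * (((N : ℝ) - p)⁻¹ * (C * N)) := by
        gcongr
        exact (S2_le_of_rank_eq X β ε (by omega) (hrank N (by omega)) ω).trans
          (by gcongr)
    _ = c * C * N / ((N : ℝ) - p) := by field_simp
    _ ≤ N := by
        rw [div_le_iff₀ hNp, mul_comm (N : ℝ)]
        gcongr

theorem procedure_terminates_wp1_general (μ : Measure Ω) [IsProbabilityMeasure μ]
    (p : ℕ) (σ2 : ℝ≥0)
    (X : ℕ → Fin p → ℝ) (β : Fin p → ℝ) (ε : ℕ → Ω → ℝ)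
    (herr : GaussErrors μ σ2 ε)
    (ρ : ℝ) (hρ : 0 < ρ ∧ ρ ≤ 1) (k : ℕ) (hk : 1 ≤ k)
    (m₀ : ℕ) (m : ℕ)
    (b : ℝ) (hb : 0 < b)
    (hrank : ∀ j, p + 1 ≤ j → (designMat p X j).rank = p)
    -- the i.i.d. `χ²_k` variables of the equivalent formulation
    (U : ℕ → Ω → ℝ) (hUmeas : ∀ i, Measurable (U i))
    (hUindep : iIndepFun U μ)
    (hUlaw : ∀ i, μ.map (U i) = gammaMeasure ((k : ℝ) / 2) (1 / 2)) :
    μ {ω | {n : ℕ | stopRule p X β ε ρ b m k ω n}.Nonempty} = 1 ∧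
    (∀ᵐ ω ∂μ,
      {n : ℕ | m₀ ≤ n ∧
        ρ * ((p : ℝ) * (σ2 : ℝ) / b) * ∑ i ∈ Finset.range n, U i ω
          ≤ ((k * n : ℕ) : ℝ) * (((k * n : ℕ) : ℝ) - (p : ℝ))}.Nonempty) := by
  obtain ⟨hεmeas, hεindep, hεlaw⟩ := herr
  obtain ⟨C, hε⟩ := exists_ae_eventually_sum_comp_le_mul ε hεmeas hεindep hεlaw
    (measurable_id.pow_const 2) (memLp_id_gaussianReal 2).integrable_sq
  obtain ⟨C', hU⟩ := exists_ae_eventually_sum_comp_le_mul U hUmeas hUindep hUlaw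
    measurable_id (integrable_id_gammaMeasure (by positivity) (by norm_num))
  have hρ0 := hρ.1
  have hsample : Tendsto (fun n => m + k * n) atTop atTop :=
    tendsto_atTop_mono (fun n => (Nat.le_mul_of_pos_left n hk).trans (Nat.le_add_left _ m))
      tendsto_id
  refine ⟨?_, ?_⟩
  · have hstops : ∀ᵐ ω ∂μ, {n | stopRule p X β ε ρ b m k ω n}.Nonempty := by
      filter_upwards [hε] with ω hω
      exact (hsample.eventually (eventually_mul_S2_le X β ε hrank (by positivity) ω hω)).exists
    exact (measure_congr (ae_eq_univ.mpr (ae_iff.mp hstops))).trans measure_univ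
  · filter_upwards [hU] with ω hω
    refine ((eventually_ge_atTop m₀).and ?_).exists
    filter_upwards [hω, eventually_mul_le_mul_sub (ρ * ((p : ℝ) * σ2 / b) * C') p hk]
      with n hsum hquad
    calc ρ * ((p : ℝ) * σ2 / b) * ∑ i ∈ range n, U i ω
        ≤ ρ * ((p : ℝ) * σ2 / b) * (C' * n) := by gcongr; exact hsum
      _ = ρ * ((p : ℝ) * σ2 / b) * C' * n := by ring
      _ ≤ _ := hquad

/-- The sequential learning procedure `𝒫(ρ,k)` terminates with
probability one: `P(N_{𝒫(ρ,k)} < ∞) = 1`, i.e. the stopping set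
`{n ≥ 0 : m + kn ≥ ρ b⁻¹ p S²_{m+kn}}` is almost surely nonempty.  Equivalently,
the stopping time `t = inf {n ≥ m₀ : kn(kn − p) ≥ ρ n* Σ_{i=1}^n U_i}`, where
`U_1, U_2, …` are i.i.d. `χ²_k` random variables, is almost surely finite. -/
theorem procedure_terminates_wp1 (μ : Measure Ω) [IsProbabilityMeasure μ]
    (p : ℕ) (hp : 1 ≤ p) (σ2 : ℝ≥0) (hσ2 : 0 < σ2)
    (X : ℕ → Fin p → ℝ) (β : Fin p → ℝ) (ε : ℕ → Ω → ℝ)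
    (herr : GaussErrors μ σ2 ε)
    (ρ : ℝ) (hρ : 0 < ρ ∧ ρ ≤ 1) (k : ℕ) (hk : 1 ≤ k)
    (m₀ : ℕ) (hm₀ : 1 ≤ m₀) (m : ℕ) (hm : m = m₀ * k + p)
    (b : ℝ) (hb : 0 < b)
    (hrank : ∀ j, p + 1 ≤ j → (designMat p X j).rank = p)
    -- the i.i.d. `χ²_k` variables of the equivalent formulation
    (U : ℕ → Ω → ℝ) (hUmeas : ∀ i, Measurable (U i))
    (hUindep : iIndepFun U μ)
    (hUlaw : ∀ i, μ.map (U i) = gammaMeasure ((k : ℝ) / 2) (1 / 2)) :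
    μ {ω | {n : ℕ | stopRule p X β ε ρ b m k ω n}.Nonempty} = 1 ∧
    (∀ᵐ ω ∂μ,
      {n : ℕ | m₀ ≤ n ∧
        ρ * ((p : ℝ) * (σ2 : ℝ) / b) * ∑ i ∈ Finset.range n, U i ω
          ≤ ((k * n : ℕ) : ℝ) * (((k * n : ℕ) : ℝ) - (p : ℝ))}.Nonempty) :=
  procedure_terminates_wp1_general μ p σ2 X β ε herr ρ hρ k hk m₀ m b hb hrank U hUmeas hUindep
    hUlaw

end SeqLearn
end
end

section
/- For the sequential learning procedure 𝒫(ρ,k), the final sample size diverges as the risk bound shrinks: N_{𝒫(ρ,k)}(b) ↑ ∞ with probability one as b ↓ 0. -/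
/-!
If the residual vector at a stage `n > p` vanished, the error vector would lie in the column
space of `𝕏_n`, so a fixed nonzero combination of the errors (one annihilating the columns)
would vanish; for independent Gaussian errors this has probability zero. Hence almost surely
every `S²_n` is positive, and at each fixed stage the stopping inequality fails once `b` is
small, which forces `T(b) → ∞` as `b ↓ 0`. On the other hand `S²_n ≤ (n - p)⁻¹ ∑_{i<n} ε_i²`
(Pythagoras for the least squares fit), which the strong law keeps bounded, so for every
`b > 0` the stopping inequality holds at some stage: `T(b)` is a genuine minimum, and it is
nonincreasing in `b` because the stopping inequality only weakens as `b` grows.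
-/

open MeasureTheory ProbabilityTheory Filter Matrix NNReal

noncomputable section

open Topology

namespace Matrix

variable {m n R : Type*} [Fintype m] [Fintype n] [Field R]

theorem isUnit_of_rank_eq_card_s5 [DecidableEq n] {A : Matrix n n R}
    (h : A.rank = Fintype.card n) : IsUnit A := by
  rw [← mulVec_surjective_iff_isUnit]
  have hrange : LinearMap.range A.mulVecLin = ⊤ := Submodule.eq_top_of_finrank_eq <| by
    rw [← rank, h, Module.finrank_fintype_fun_eq_card]
  exact LinearMap.range_eq_top.1 hrange

theorem exists_ne_zero_vecMul_eq_zero (A : Matrix m n R)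
    (h : Fintype.card n < Fintype.card m) : ∃ a ≠ 0, a ᵥ* A = 0 := by
  have hker : LinearMap.ker A.vecMulLinear ≠ ⊥ :=
    LinearMap.ker_ne_bot_of_finrank_lt (by simpa using h)
  obtain ⟨a, ha, ha0⟩ := (Submodule.ne_bot_iff _).1 hker
  exact ⟨a, ha0, ha⟩

theorem transpose_mulVec_sub_mulVec_nonsing_inv [DecidableEq n] {A : Matrix m n R}
    (hA : IsUnit (Aᵀ * A)) (y : m → R) :
    Aᵀ *ᵥ (y - A *ᵥ ((Aᵀ * A)⁻¹ *ᵥ (Aᵀ *ᵥ y))) = 0 := by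
  rw [mulVec_sub, mulVec_mulVec, mulVec_mulVec,
    mul_nonsing_inv _ ((Aᵀ * A).isUnit_iff_isUnit_det.1 hA), one_mulVec, sub_self]

variable [LinearOrder R] [IsStrictOrderedRing R]

theorem isUnit_transpose_mul_self [DecidableEq n] {A : Matrix m n R}
    (h : A.rank = Fintype.card n) : IsUnit (Aᵀ * A) :=
  isUnit_of_rank_eq_card_s5 (by rw [rank_transpose_mul_self, h])

theorem dotProduct_self_sub_mulVec_le {A : Matrix m n R} {y e : m → R} {β b : n → R}
    (hy : y = A *ᵥ β + e) (hb : Aᵀ *ᵥ (y - A *ᵥ b) = 0) :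
    (y - A *ᵥ b) ⬝ᵥ (y - A *ᵥ b) ≤ e ⬝ᵥ e := by
  set r := y - A *ᵥ b
  have he : e = r + A *ᵥ (b - β) := by
    simp only [r, hy, mulVec_sub]
    abel
  have horth : r ⬝ᵥ A *ᵥ (b - β) = 0 := by
    rw [dotProduct_mulVec, ← mulVec_transpose, hb, zero_dotProduct]
  have hfit : 0 ≤ A *ᵥ (b - β) ⬝ᵥ A *ᵥ (b - β) :=
    Finset.sum_nonneg fun i _ => mul_self_nonneg _
  rw [he, add_dotProduct, dotProduct_add, dotProduct_add, horth,
    dotProduct_comm (A *ᵥ (b - β)) r, horth]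
  linarith

end Matrix

namespace ProbabilityTheory

variable {Ω : Type*} [MeasurableSpace Ω] {μ : Measure Ω}

theorem IndepFun.measure_eq_eq_zero {α : Type*} [MeasurableSpace α] [MeasurableEq α]
    [IsFiniteMeasure μ] {f g : Ω → α} (hfg : IndepFun f g μ) (hf : Measurable f)
    (hg : Measurable g) [NullSingletonClass (μ.map f)] :
    μ {ω | f ω = g ω} = 0 := by
  have hdiag : MeasurableSet (Set.diagonal α) := measurableSet_diagonal
  have hpair : μ {ω | f ω = g ω} = μ.map (fun ω => (f ω, g ω)) (Set.diagonal α) := by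
    rw [Measure.map_apply (hf.prodMk hg) hdiag]
    rfl
  have hslice : ∀ y, (fun x => (x, y)) ⁻¹' Set.diagonal α = {y} := fun y => by ext; simp
  rw [hpair, (indepFun_iff_map_prod_eq_prod_map_map hf.aemeasurable hg.aemeasurable).1 hfg,
    Measure.prod_apply_symm hdiag]
  simp [hslice]

theorem iIndepFun.measure_sum_mul_eq_zero_eq_zero {ι : Type*} [Fintype ι]
    [IsProbabilityMeasure μ] {ε : ι → Ω → ℝ} (hindep : iIndepFun ε μ)
    (hmeas : ∀ i, Measurable (ε i)) {v : ℝ≥0} (hv : v ≠ 0)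
    (hlaw : ∀ i, μ.map (ε i) = gaussianReal 0 v) {a : ι → ℝ} (ha : a ≠ 0) :
    μ {ω | ∑ i, a i * ε i ω = 0} = 0 := by
  classical
  obtain ⟨i₀, hi₀⟩ := Function.ne_iff.1 ha
  set Z : ι → Ω → ℝ := fun i ω => a i * ε i ω
  have hZ : ∀ i, Measurable (Z i) := fun i => (hmeas i).const_mul _
  have hindepZ : IndepFun (Z i₀) (fun ω => -∑ i ∈ Finset.univ.erase i₀, Z i ω) μ := by
    have h := ((hindep.comp (fun i x => a i * x) fun i => measurable_const_mul _)
      |>.indepFun_finsetSum_of_notMem hZ (Finset.notMem_erase i₀ Finset.univ)).symm.comp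
      measurable_id measurable_neg
    simpa [Function.comp_def, Finset.sum_apply] using h
  have : NullSingletonClass (μ.map (Z i₀)) := by
    rw [show Z i₀ = (a i₀ * ·) ∘ ε i₀ from rfl,
      ← Measure.map_map (measurable_const_mul _) (hmeas i₀), hlaw, gaussianReal_map_const_mul]
    exact nullSingletonClass_gaussianReal
      (mul_ne_zero (by simpa [← NNReal.coe_ne_zero] using hi₀) hv)
  convert hindepZ.measure_eq_eq_zero (hZ i₀) (by fun_prop) using 2
  ext ω
  rw [Set.mem_ofPred_eq, Set.mem_ofPred_eq, ← Finset.add_sum_erase _ _ (Finset.mem_univ i₀),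
    eq_neg_iff_add_eq_zero]

theorem ae_eventually_sum_range_le {X : ℕ → Ω → ℝ} (hint : Integrable (X 0) μ)
    (hindep : Pairwise (Function.onFun (IndepFun · · μ) X))
    (hident : ∀ i, IdentDistrib (X i) (X 0) μ μ) :
    ∀ᵐ ω ∂μ, ∀ᶠ n : ℕ in atTop, ∑ i ∈ Finset.range n, X i ω ≤ (μ[X 0] + 1) * n := by
  filter_upwards [strong_law_ae_real X hint hindep hident] with ω hω
  filter_upwards [hω.eventually (eventually_le_nhds (lt_add_one _)), eventually_gt_atTop 0]
    with n hn hn0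
  rwa [div_le_iff₀ (by positivity)] at hn

end ProbabilityTheory

namespace SeqLearn

variable {Ω : Type*}

section LinearModel

variable {p : ℕ} {X : ℕ → Fin p → ℝ} {β : Fin p → ℝ} {ε : ℕ → Ω → ℝ} {n : ℕ} {ω : Ω}

theorem Yvec_eq_mulVec_add :
    Yvec p X β ε n ω = designMat p X n *ᵥ β + fun i : Fin n => ε i ω := by
  ext i
  simp [Yvec, designMat, mulVec, dotProduct]

theorem S2_eq_inv_mul_dotProduct : S2 p X β ε n ω = ((n : ℝ) - p)⁻¹ *
    ((Yvec p X β ε n ω - designMat p X n *ᵥ lse p X β ε n ω) ⬝ᵥ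
      (Yvec p X β ε n ω - designMat p X n *ᵥ lse p X β ε n ω)) := by
  simp [S2, dotProduct, sq]

theorem S2_le_inv_mul_sum_sq (hpn : p < n) (hrank : (designMat p X n).rank = p) :
    S2 p X β ε n ω ≤ ((n : ℝ) - p)⁻¹ * ∑ i ∈ Finset.range n, ε i ω ^ 2 := by
  have hD : IsUnit ((designMat p X n)ᵀ * designMat p X n) :=
    isUnit_transpose_mul_self (by rw [hrank, Fintype.card_fin])
  have hpn' : (p : ℝ) < n := by exact_mod_cast hpn
  rw [S2_eq_inv_mul_dotProduct, ← Fin.sum_univ_eq_sum_range (fun i => ε i ω ^ 2)]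
  refine mul_le_mul_of_nonneg_left ?_ (inv_nonneg.2 (sub_nonneg.2 hpn'.le))
  calc _ ≤ (fun i : Fin n => ε i ω) ⬝ᵥ fun i : Fin n => ε i ω :=
        dotProduct_self_sub_mulVec_le Yvec_eq_mulVec_add
          (transpose_mulVec_sub_mulVec_nonsing_inv hD _)
    _ = ∑ i : Fin n, ε i ω ^ 2 := by simp only [dotProduct, sq]

theorem exists_sum_mul_eq_zero_of_S2_nonpos (hpn : p < n) :
    ∃ a : Fin n → ℝ, a ≠ 0 ∧ ∀ ω, S2 p X β ε n ω ≤ 0 → ∑ i, a i * ε i ω = 0 := by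
  obtain ⟨a, ha, haD⟩ := (designMat p X n).exists_ne_zero_vecMul_eq_zero (by simpa using hpn)
  refine ⟨a, ha, fun ω hS => ?_⟩
  have hpn' : (0 : ℝ) < n - p := sub_pos.2 (by exact_mod_cast hpn)
  rw [S2_eq_inv_mul_dotProduct, mul_nonpos_iff_pos_imp_nonpos] at hS
  have hres := (hS.1 (inv_pos.2 hpn')).antisymm (Finset.sum_nonneg fun i _ => mul_self_nonneg _)
  rw [dotProduct_self_eq_zero, sub_eq_zero, Yvec_eq_mulVec_add] at hres
  have he : (fun i : Fin n => ε i ω) = designMat p X n *ᵥ (lse p X β ε n ω - β) := by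
    rw [mulVec_sub, eq_sub_iff_add_eq', hres]
  calc ∑ i, a i * ε i ω = a ⬝ᵥ fun i : Fin n => ε i ω := rfl
    _ = 0 := by rw [he, dotProduct_mulVec, haD, zero_dotProduct]

end LinearModel

section StoppingRule

variable {p : ℕ} {X : ℕ → Fin p → ℝ} {β : Fin p → ℝ} {ε : ℕ → Ω → ℝ} {ρ : ℝ} {m k : ℕ}
  {ω : Ω}

theorem exists_stopRule (hk : 0 < k) (hρ : 0 ≤ ρ) {b : ℝ} (hb : 0 ≤ b)
    (hS : IsBoundedUnder (· ≤ ·) atTop fun n => S2 p X β ε n ω) :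
    ∃ n, stopRule p X β ε ρ b m k ω n := by
  obtain ⟨C, hC⟩ := hS
  have hN : Tendsto (fun n => m + k * n) atTop atTop :=
    tendsto_atTop_mono (fun n => le_add_left (Nat.le_mul_of_pos_left n hk)) tendsto_id
  obtain ⟨n, hSn, hn⟩ := ((hN.eventually hC).and
    ((tendsto_natCast_atTop_atTop.comp hN).eventually_ge_atTop (ρ * b⁻¹ * p * C))).exists
  exact ⟨n, (mul_le_mul_of_nonneg_left hSn (by positivity)).trans hn⟩

theorem stopRule_mono (hρ : 0 ≤ ρ) {n : ℕ} (hS : 0 ≤ S2 p X β ε (m + k * n) ω) {b₁ b₂ : ℝ}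
    (hb₁ : 0 < b₁) (hb : b₁ ≤ b₂) (h : stopRule p X β ε ρ b₁ m k ω n) :
    stopRule p X β ε ρ b₂ m k ω n :=
  le_trans (by gcongr) h

theorem Tstop_anti (hρ : 0 ≤ ρ) (hS : ∀ n, 0 ≤ S2 p X β ε (m + k * n) ω) {b₁ b₂ : ℝ}
    (hb₁ : 0 < b₁) (hb : b₁ ≤ b₂) (hne : ∃ n, stopRule p X β ε ρ b₁ m k ω n) :
    Tstop p X β ε ρ b₂ m k ω ≤ Tstop p X β ε ρ b₁ m k ω :=
  Nat.sInf_le (stopRule_mono hρ (hS _) hb₁ hb (Nat.sInf_mem hne))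

theorem eventually_not_stopRule (hρ : 0 < ρ) (hp : 0 < p) {n : ℕ}
    (hS : 0 < S2 p X β ε (m + k * n) ω) : ∀ᶠ b in 𝓝[>] 0, ¬ stopRule p X β ε ρ b m k ω n := by
  have hlim : Tendsto (fun b => ρ * b⁻¹ * p * S2 p X β ε (m + k * n) ω) (𝓝[>] 0) atTop :=
    ((tendsto_inv_nhdsGT_zero.const_mul_atTop hρ).atTop_mul_const (by exact_mod_cast hp))
      |>.atTop_mul_const hS
  filter_upwards [hlim.eventually_gt_atTop ((m + k * n : ℕ) : ℝ)] with b hb using not_le.2 hb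

theorem tendsto_Tstop (hρ : 0 < ρ) (hp : 0 < p) (hS : ∀ n, 0 < S2 p X β ε (m + k * n) ω)
    (hne : ∀ b, 0 < b → ∃ n, stopRule p X β ε ρ b m k ω n) :
    Tendsto (fun b => Tstop p X β ε ρ b m k ω) (𝓝[>] 0) atTop := by
  refine tendsto_atTop.2 fun M => ?_
  have hsmall : ∀ᶠ b in 𝓝[>] 0, ∀ n ∈ Finset.range M, ¬ stopRule p X β ε ρ b m k ω n :=
    (eventually_all_finset _).2 fun n _ => eventually_not_stopRule hρ hp (hS n)
  filter_upwards [self_mem_nhdsWithin, hsmall] with b (hb : 0 < b) hsmall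
  by_contra! hlt
  exact hsmall _ (Finset.mem_range.2 hlt) (Nat.sInf_mem (hne b hb))

theorem Nfin_le_Nfin_of_Tstop_le (hρ : 0 ≤ ρ) {b₁ b₂ : ℝ}
    (h : Tstop p X β ε ρ b₂ m k ω ≤ Tstop p X β ε ρ b₁ m k ω) :
    Nfin p X β ε ρ b₂ m k ω ≤ Nfin p X β ε ρ b₁ m k ω := by
  unfold Nfin Nstar
  gcongr

theorem tendsto_Nfin_of_tendsto_Tstop (hρ : 0 < ρ) (hk : 0 < k) {l : Filter ℝ}
    (h : Tendsto (fun b => Tstop p X β ε ρ b m k ω) l atTop) :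
    Tendsto (fun b => Nfin p X β ε ρ b m k ω) l atTop :=
  tendsto_nat_ceil_atTop.comp <| Tendsto.const_mul_atTop (inv_pos.2 hρ) <|
    tendsto_atTop_add_const_left _ _ <|
      (tendsto_natCast_atTop_atTop.comp h).const_mul_atTop (Nat.cast_pos.2 hk)

end StoppingRule

variable [MeasurableSpace Ω]

section GaussErrors

variable {μ : Measure Ω} {σ2 : ℝ≥0} {p : ℕ} {X : ℕ → Fin p → ℝ} {β : Fin p → ℝ}
  {ε : ℕ → Ω → ℝ}

theorem GaussErrors.ae_S2_pos [IsProbabilityMeasure μ] (herr : GaussErrors μ σ2 ε)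
    (hσ2 : σ2 ≠ 0) {n : ℕ} (hpn : p < n) : ∀ᵐ ω ∂μ, 0 < S2 p X β ε n ω := by
  obtain ⟨hmeas, hindep, hlaw⟩ := herr
  obtain ⟨a, ha, hS⟩ := exists_sum_mul_eq_zero_of_S2_nonpos (X := X) (β := β) (ε := ε) hpn
  have hnull := (hindep.precomp Fin.val_injective).measure_sum_mul_eq_zero_eq_zero
    (fun i => hmeas i) hσ2 (fun i => hlaw i) ha
  rw [ae_iff]
  exact measure_mono_null (fun ω hω => hS ω (not_lt.1 hω)) hnull

theorem GaussErrors.ae_eventually_sum_range_sq_le (herr : GaussErrors μ σ2 ε) :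
    ∀ᵐ ω ∂μ, ∀ᶠ n : ℕ in atTop,
      ∑ i ∈ Finset.range n, ε i ω ^ 2 ≤ (μ[fun ω => ε 0 ω ^ 2] + 1) * n := by
  obtain ⟨hmeas, hindep, hlaw⟩ := herr
  have hsq : Measurable fun x : ℝ => x ^ 2 := measurable_id.pow_const 2
  have hL2 : MemLp (ε 0) 2 μ :=
    (memLp_map_measure_iff aestronglyMeasurable_id (hmeas 0).aemeasurable).1
      (by rw [hlaw]; exact memLp_id_gaussianReal 2)
  refine ae_eventually_sum_range_le (X := fun i ω => ε i ω ^ 2) hL2.integrable_sq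
    (fun i j hij => (hindep.indepFun hij).comp hsq hsq) fun i => ?_
  exact IdentDistrib.comp
    ⟨(hmeas i).aemeasurable, (hmeas 0).aemeasurable, by rw [hlaw, hlaw]⟩ hsq

theorem GaussErrors.ae_isBoundedUnder_S2 (herr : GaussErrors μ σ2 ε)
    (hrank : ∀ n, p < n → (designMat p X n).rank = p) :
    ∀ᵐ ω ∂μ, IsBoundedUnder (· ≤ ·) atTop fun n => S2 p X β ε n ω := by
  set E := μ[fun ω => ε 0 ω ^ 2]
  have hE : 0 ≤ E := integral_nonneg fun ω => sq_nonneg _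
  filter_upwards [herr.ae_eventually_sum_range_sq_le] with ω hω
  -- once `n > 2p`, `n / (n - p) < 2`
  refine ⟨2 * (E + 1), eventually_map.2 ?_⟩
  filter_upwards [hω, eventually_ge_atTop (2 * p + 1)] with n hsum hn
  have hn' : (2 * p + 1 : ℝ) ≤ n := by exact_mod_cast hn
  have hpn : (0 : ℝ) < n - p := by linarith
  calc S2 p X β ε n ω ≤ ((n : ℝ) - p)⁻¹ * ∑ i ∈ Finset.range n, ε i ω ^ 2 :=
        S2_le_inv_mul_sum_sq (by omega) (hrank n (by omega))
    _ ≤ ((n : ℝ) - p)⁻¹ * ((E + 1) * n) := mul_le_mul_of_nonneg_left hsum (by positivity)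
    _ ≤ 2 * (E + 1) := by
        rw [inv_mul_le_iff₀ hpn]
        nlinarith

end GaussErrors

/-- For the sequential learning procedure `𝒫(ρ,k)`, the final
sample size diverges as the risk bound shrinks: `N_{𝒫(ρ,k)}(b) ↑ ∞` with
probability one as `b ↓ 0` (monotone nonincreasing in `b`, and tending to
infinity as `b → 0⁺`). -/
theorem final_sample_size_tendsto_atTop (μ : Measure Ω) [IsProbabilityMeasure μ]
    (p : ℕ) (hp : 1 ≤ p) (σ2 : ℝ≥0) (hσ2 : 0 < σ2)
    (X : ℕ → Fin p → ℝ) (β : Fin p → ℝ) (ε : ℕ → Ω → ℝ)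
    (herr : GaussErrors μ σ2 ε)
    (ρ : ℝ) (hρ : 0 < ρ ∧ ρ ≤ 1) (k : ℕ) (hk : 1 ≤ k)
    (m₀ : ℕ) (hm₀ : 1 ≤ m₀) (m : ℕ) (hm : m = m₀ * k + p)
    (hrank : ∀ j, p + 1 ≤ j → (designMat p X j).rank = p) :
    ∀ᵐ ω ∂μ,
      (∀ b₁ b₂ : ℝ, 0 < b₁ → b₁ ≤ b₂ →
          Nfin p X β ε ρ b₂ m k ω ≤ Nfin p X β ε ρ b₁ m k ω) ∧
      Tendsto (fun b : ℝ => Nfin p X β ε ρ b m k ω) (nhdsWithin 0 (Set.Ioi 0))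
        atTop := by
  obtain ⟨hρ, -⟩ := hρ
  have hpm : ∀ n, p < m + k * n := fun n => by
    have := Nat.mul_le_mul hm₀ hk
    omega
  filter_upwards [ae_all_iff.2 fun n => herr.ae_S2_pos (X := X) (β := β) hσ2.ne' (hpm n),
    herr.ae_isBoundedUnder_S2 (β := β) hrank] with ω hpos hbdd
  have hne : ∀ b, 0 < b → ∃ n, stopRule p X β ε ρ b m k ω n :=
    fun b hb => exists_stopRule hk hρ.le hb.le hbdd
  exact ⟨fun b₁ b₂ hb₁ hb => Nfin_le_Nfin_of_Tstop_le hρ.le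
      (Tstop_anti hρ.le (fun n => (hpos n).le) hb₁ hb (hne b₁ hb₁)),
    tendsto_Nfin_of_tendsto_Tstop hρ hk (tendsto_Tstop hρ hp hpos hne)⟩

end SeqLearn
end
end
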